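/- arXiv:chao-dyn/9407014 — 3 statements merged into one kernel-verified Lean document; each statement's English description precedes it below -/
import Mathlib

section
/- Let F : ℝ × ℝ → ℝ be C⁴ and set f₁ = −O⁻F and f₂ = O⁺F. Then the pair (f₁, f₂) satisfies the reaction–diffusion system if and only if F satisfies the single scalar equation O⁺O⁻F = −K_μ(f₁, f₂); moreover, for a pair of this form, each of the two equations of the system separately is equivalent to this scalar equation. -/
open Real MeasureTheory

noncomputable def pderivX (F : ℝ × ℝ → ℝ) : ℝ × ℝ → ℝ :=
  fun p => deriv (fun x => F (x, p.2)) p.1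

noncomputable def pderivT (F : ℝ × ℝ → ℝ) : ℝ × ℝ → ℝ :=
  fun p => deriv (fun t => F (p.1, t)) p.2

/-- The operator `O⁺ = ∂/∂t + v ∂/∂x − μ ∂²/∂x²`. -/
noncomputable def Oplus (v μ : ℝ) (F : ℝ × ℝ → ℝ) : ℝ × ℝ → ℝ :=
  fun p => pderivT F p + v * pderivX F p - μ * pderivX (pderivX F) p

/-- The operator `O⁻ = ∂/∂t − v ∂/∂x − μ ∂²/∂x²`. -/
noncomputable def Ominus (v μ : ℝ) (F : ℝ × ℝ → ℝ) : ℝ × ℝ → ℝ :=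
  fun p => pderivT F p - v * pderivX F p - μ * pderivX (pderivX F) p

/-- The nonlinear operator `K_μ`. -/
noncomputable def Kmu (α β v μ : ℝ) (f₁ f₂ : ℝ × ℝ → ℝ) : ℝ × ℝ → ℝ :=
  fun p =>
    -α * f₁ p + β * f₂ p + f₁ p * f₂ p
      + (μ * (f₁ p + f₂ p) / (4 * v)) *
          (((α + β) / v) * (f₁ p + f₂ p)
            - 4 * pderivX (fun q => f₁ q - f₂ q) p
            + (f₁ p + f₂ p) * (f₁ p - f₂ p) / v)
      + μ ^ 2 *
          (-((f₁ p + f₂ p) ^ 4) / (16 * v ^ 4)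
            + (f₁ p + f₂ p) ^ 2 * pderivX (fun q => f₁ q + f₂ q) p / (2 * v ^ 3)
            - pderivX (fun q => (f₁ q + f₂ q) ^ 2) p / (2 * v ^ 2))

/-- The reaction–diffusion system at a point `p = (x, t)`. -/
def RDSystem (α β v μ : ℝ) (f₁ f₂ : ℝ × ℝ → ℝ) (p : ℝ × ℝ) : Prop :=
  pderivT f₁ p + v * pderivX f₁ p
      = μ * pderivX (pderivX f₁) p + Kmu α β v μ f₁ f₂ p ∧
  pderivT f₂ p - v * pderivX f₂ p
      = μ * pderivX (pderivX f₂) p - Kmu α β v μ f₁ f₂ p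

/-- Modified Bessel function `I₀`. -/
noncomputable def besselI0 (z : ℝ) : ℝ :=
  ∑' k : ℕ, (z / 2) ^ (2 * k) / (Nat.factorial k : ℝ) ^ 2

/-- Modified Bessel function `I₁`. -/
noncomputable def besselI1 (z : ℝ) : ℝ :=
  ∑' k : ℕ, (z / 2) ^ (2 * k + 1) / ((Nat.factorial k : ℝ) * (Nat.factorial (k + 1) : ℝ))

/-- The explicit solution formula for the Klein–Gordon type equation. -/
noncomputable def Wsol (α β v : ℝ) (W₀ W₁ : ℝ → ℝ) (x t : ℝ) : ℝ :=
  (W₀ (x + v * t) + W₀ (x - v * t)) / 2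
    + (1 / 2) * ∫ y in (x - v * t)..(x + v * t),
        besselI0 (Real.sqrt (α * β) / v * Real.sqrt (v ^ 2 * t ^ 2 - (x - y) ^ 2)) * W₁ y
    + (Real.sqrt (α * β) * t / 2) * ∫ y in (x - v * t)..(x + v * t),
        besselI1 (Real.sqrt (α * β) / v * Real.sqrt (v ^ 2 * t ^ 2 - (x - y) ^ 2)) /
          Real.sqrt (v ^ 2 * t ^ 2 - (x - y) ^ 2) * W₀ y

/-- The heat kernel with diffusivity `μ`. -/
noncomputable def heatG (μ x t : ℝ) : ℝ :=
  (Real.sqrt (4 * π * μ * t))⁻¹ * Real.exp (-(x ^ 2) / (4 * μ * t))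

/-!
Both `O⁺` and `O⁻` are of the form `∂ₜ + a ∂ₓ − μ ∂ₓ²`, and two such constant-coefficient
operators commute on `C⁴` functions (the only nontrivial point is `∂ₜ∂ₓ F = ∂ₓ∂ₜ F`, by
Schwarz). Since `f₁ = −O⁻F`, the first equation of the system reads `O⁺f₁ = K`, i.e.
`O⁺O⁻F = −K`; since `f₂ = O⁺F`, the second reads `O⁻O⁺F = −K`, which is the same
equation by commutativity.
-/

section PartialDerivatives

variable {f g h : ℝ × ℝ → ℝ} {p : ℝ × ℝ}

lemma hasDerivAt_pderivX (hf : DifferentiableAt ℝ f p) :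
    HasDerivAt (fun x => f (x, p.2)) (fderiv ℝ f p (1, 0)) p.1 :=
  hf.hasFDerivAt.comp_hasDerivAt p.1 ((hasDerivAt_id p.1).prodMk (hasDerivAt_const _ _))

lemma hasDerivAt_pderivT (hf : DifferentiableAt ℝ f p) :
    HasDerivAt (fun t => f (p.1, t)) (fderiv ℝ f p (0, 1)) p.2 :=
  hf.hasFDerivAt.comp_hasDerivAt p.2 ((hasDerivAt_const _ _).prodMk (hasDerivAt_id p.2))

lemma pderivX_eq_fderiv (hf : DifferentiableAt ℝ f p) : pderivX f p = fderiv ℝ f p (1, 0) :=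
  (hasDerivAt_pderivX hf).deriv

lemma pderivT_eq_fderiv (hf : DifferentiableAt ℝ f p) : pderivT f p = fderiv ℝ f p (0, 1) :=
  (hasDerivAt_pderivT hf).deriv

lemma pderivX_add_mul_sub_mul (hf : DifferentiableAt ℝ f p) (hg : DifferentiableAt ℝ g p)
    (hh : DifferentiableAt ℝ h p) (a c : ℝ) :
    pderivX (fun q => f q + a * g q - c * h q) p
      = pderivX f p + a * pderivX g p - c * pderivX h p := by
  rw [pderivX_eq_fderiv hf, pderivX_eq_fderiv hg, pderivX_eq_fderiv hh]
  exact (((hasDerivAt_pderivX hf).add ((hasDerivAt_pderivX hg).const_mul a)).sub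
    ((hasDerivAt_pderivX hh).const_mul c)).deriv

lemma pderivT_add_mul_sub_mul (hf : DifferentiableAt ℝ f p) (hg : DifferentiableAt ℝ g p)
    (hh : DifferentiableAt ℝ h p) (a c : ℝ) :
    pderivT (fun q => f q + a * g q - c * h q) p
      = pderivT f p + a * pderivT g p - c * pderivT h p := by
  rw [pderivT_eq_fderiv hf, pderivT_eq_fderiv hg, pderivT_eq_fderiv hh]
  exact (((hasDerivAt_pderivT hf).add ((hasDerivAt_pderivT hg).const_mul a)).sub
    ((hasDerivAt_pderivT hh).const_mul c)).deriv

lemma pderivX_neg (f : ℝ × ℝ → ℝ) : pderivX (fun q => -f q) = fun q => -pderivX f q :=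
  funext fun _ => deriv.neg

lemma pderivT_neg (f : ℝ × ℝ → ℝ) : pderivT (fun q => -f q) = fun q => -pderivT f q :=
  funext fun _ => deriv.neg

lemma contDiff_pderivX {n m : WithTop ℕ∞} (hf : ContDiff ℝ n f) (h : m + 1 ≤ n) :
    ContDiff ℝ m (pderivX f) := by
  have hd : Differentiable ℝ f := hf.differentiable (fun h0 => by subst h0; simp at h)
  rw [show pderivX f = fun q => fderiv ℝ f q (1, 0) from funext fun q => pderivX_eq_fderiv (hd q)]
  exact (hf.fderiv_right h).clm_apply contDiff_const

lemma contDiff_pderivT {n m : WithTop ℕ∞} (hf : ContDiff ℝ n f) (h : m + 1 ≤ n) :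
    ContDiff ℝ m (pderivT f) := by
  have hd : Differentiable ℝ f := hf.differentiable (fun h0 => by subst h0; simp at h)
  rw [show pderivT f = fun q => fderiv ℝ f q (0, 1) from funext fun q => pderivT_eq_fderiv (hd q)]
  exact (hf.fderiv_right h).clm_apply contDiff_const

lemma pderivT_pderivX_comm (hf : ContDiff ℝ 2 f) (p : ℝ × ℝ) :
    pderivT (pderivX f) p = pderivX (pderivT f) p := by
  have hd : Differentiable ℝ f := hf.differentiable (by norm_num)
  have hd' : Differentiable ℝ (fderiv ℝ f) :=
    (hf.fderiv_right (m := 1) (by norm_num)).differentiable (by norm_num)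
  have hdir : ∀ w : ℝ × ℝ, DifferentiableAt ℝ (fun q => fderiv ℝ f q w) p :=
    fun w => (hd' p).clm_apply (differentiableAt_const w)
  have hsecond : ∀ w u : ℝ × ℝ,
      fderiv ℝ (fun q => fderiv ℝ f q w) p u = fderiv ℝ (fderiv ℝ f) p u w := fun w u => by
    rw [fderiv_clm_apply (hd' p) (differentiableAt_const w)]
    simp
  rw [show pderivX f = fun q => fderiv ℝ f q (1, 0) from funext fun q => pderivX_eq_fderiv (hd q),
    show pderivT f = fun q => fderiv ℝ f q (0, 1) from funext fun q => pderivT_eq_fderiv (hd q),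
    pderivT_eq_fderiv (hdir _), pderivX_eq_fderiv (hdir _), hsecond, hsecond]
  exact (hf.contDiffAt.isSymmSndFDerivAt
    (by simp [minSmoothness_of_isRCLikeNormedField])).eq (0, 1) (1, 0)

end PartialDerivatives

section Operators

variable {v μ : ℝ} {F : ℝ × ℝ → ℝ}

lemma Ominus_eq_Oplus_neg : Ominus v μ F = Oplus (-v) μ F := by
  funext p
  simp only [Ominus, Oplus]
  ring

lemma Oplus_neg (G : ℝ × ℝ → ℝ) (p : ℝ × ℝ) :
    Oplus v μ (fun q => -G q) p = -Oplus v μ G p := by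
  simp only [Oplus, pderivT_neg, pderivX_neg]
  ring

lemma Oplus_Oplus_apply (hF : ContDiff ℝ 4 F) (a b : ℝ) (p : ℝ × ℝ) :
    Oplus a μ (Oplus b μ F) p
      = pderivT (pderivT F) p + (a + b) * pderivX (pderivT F) p
        + a * b * pderivX (pderivX F) p
        - μ * (pderivT (pderivX (pderivX F)) p + pderivX (pderivX (pderivT F)) p)
        - μ * (a + b) * pderivX (pderivX (pderivX F)) p
        + μ ^ 2 * pderivX (pderivX (pderivX (pderivX F))) p := by
  have hX : ContDiff ℝ 3 (pderivX F) := contDiff_pderivX hF (by norm_num)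
  have hT : ContDiff ℝ 3 (pderivT F) := contDiff_pderivT hF (by norm_num)
  have hXX : ContDiff ℝ 2 (pderivX (pderivX F)) := contDiff_pderivX hX (by norm_num)
  have dT : Differentiable ℝ (pderivT F) := hT.differentiable (by norm_num)
  have dX : Differentiable ℝ (pderivX F) := hX.differentiable (by norm_num)
  have dXX : Differentiable ℝ (pderivX (pderivX F)) := hXX.differentiable (by norm_num)
  have dXT : Differentiable ℝ (pderivX (pderivT F)) :=
    (contDiff_pderivX hT (m := 2) (by norm_num)).differentiable (by norm_num)
  have dXXX : Differentiable ℝ (pderivX (pderivX (pderivX F))) :=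
    (contDiff_pderivX hXX (m := 1) (by norm_num)).differentiable (by norm_num)
  have hXOplus : pderivX (Oplus b μ F) = fun q => pderivX (pderivT F) q
      + b * pderivX (pderivX F) q - μ * pderivX (pderivX (pderivX F)) q :=
    funext fun q => pderivX_add_mul_sub_mul (dT q) (dX q) (dXX q) b μ
  have hTOplus : pderivT (Oplus b μ F) p = pderivT (pderivT F) p
      + b * pderivT (pderivX F) p - μ * pderivT (pderivX (pderivX F)) p :=
    pderivT_add_mul_sub_mul (dT p) (dX p) (dXX p) b μ
  have hXXOplus := pderivX_add_mul_sub_mul (dXT p) (dXX p) (dXXX p) b μ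
  have hXT := pderivT_pderivX_comm (hF.of_le (by norm_num)) p
  simp only [Oplus]
  rw [hTOplus, hXOplus, hXXOplus, hXT]
  ring

theorem Oplus_comm (hF : ContDiff ℝ 4 F) (a b : ℝ) :
    Oplus a μ (Oplus b μ F) = Oplus b μ (Oplus a μ F) := by
  funext p
  rw [Oplus_Oplus_apply hF, Oplus_Oplus_apply hF]
  ring

theorem Ominus_Oplus_comm (hF : ContDiff ℝ 4 F) :
    Ominus v μ (Oplus v μ F) = Oplus v μ (Ominus v μ F) := by
  simp only [Ominus_eq_Oplus_neg]
  exact Oplus_comm hF (-v) v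

lemma pderivT_add_eq_iff_Oplus {f : ℝ × ℝ → ℝ} {p : ℝ × ℝ} {K : ℝ} :
    pderivT f p + v * pderivX f p = μ * pderivX (pderivX f) p + K ↔ Oplus v μ f p = K := by
  simp only [Oplus]
  constructor <;> intro h <;> linarith

lemma pderivT_sub_eq_iff_Ominus {f : ℝ × ℝ → ℝ} {p : ℝ × ℝ} {K : ℝ} :
    pderivT f p - v * pderivX f p = μ * pderivX (pderivX f) p - K ↔ Ominus v μ f p = -K := by
  simp only [Ominus]
  constructor <;> intro h <;> linarith

end Operators

theorem system_iff_scalar_general (α β v μ : ℝ)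
    (F : ℝ × ℝ → ℝ) (hF : ContDiff ℝ 4 F)
    (f₁ f₂ : ℝ × ℝ → ℝ)
    (hf₁ : f₁ = fun p => -(Ominus v μ F p))
    (hf₂ : f₂ = fun p => Oplus v μ F p) :
    ((∀ p : ℝ × ℝ, RDSystem α β v μ f₁ f₂ p) ↔
        (∀ p : ℝ × ℝ, Oplus v μ (Ominus v μ F) p = - Kmu α β v μ f₁ f₂ p)) ∧
    (∀ p : ℝ × ℝ,
      ((pderivT f₁ p + v * pderivX f₁ p
          = μ * pderivX (pderivX f₁) p + Kmu α β v μ f₁ f₂ p) ↔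
        Oplus v μ (Ominus v μ F) p = - Kmu α β v μ f₁ f₂ p) ∧
      ((pderivT f₂ p - v * pderivX f₂ p
          = μ * pderivX (pderivX f₂) p - Kmu α β v μ f₁ f₂ p) ↔
        Oplus v μ (Ominus v μ F) p = - Kmu α β v μ f₁ f₂ p)) := by
  have hOplus₁ : ∀ p, Oplus v μ f₁ p = -Oplus v μ (Ominus v μ F) p := by
    subst hf₁
    exact Oplus_neg _
  have hOminus₂ : Ominus v μ f₂ = Oplus v μ (Ominus v μ F) := by
    subst hf₂
    exact Ominus_Oplus_comm hF
  have first (p : ℝ × ℝ) : pderivT f₁ p + v * pderivX f₁ p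
        = μ * pderivX (pderivX f₁) p + Kmu α β v μ f₁ f₂ p ↔
      Oplus v μ (Ominus v μ F) p = -Kmu α β v μ f₁ f₂ p := by
    rw [pderivT_add_eq_iff_Oplus, hOplus₁, neg_eq_iff_eq_neg]
  have second (p : ℝ × ℝ) : pderivT f₂ p - v * pderivX f₂ p
        = μ * pderivX (pderivX f₂) p - Kmu α β v μ f₁ f₂ p ↔
      Oplus v μ (Ominus v μ F) p = -Kmu α β v μ f₁ f₂ p := by
    rw [pderivT_sub_eq_iff_Ominus, hOminus₂]
  exact ⟨forall_congr' fun p => (and_congr (first p) (second p)).trans and_self_iff,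
    fun p => ⟨first p, second p⟩⟩

/-- For `f₁ = −O⁻F`, `f₂ = O⁺F`, the reaction–diffusion system is equivalent
to the scalar equation `O⁺O⁻F = −K_μ(f₁,f₂)`, and each equation separately is equivalent
to the scalar equation. -/
theorem system_iff_scalar (α β v μ : ℝ) (hα : 0 < α) (hβ : 0 < β) (hv : 0 < v) (hμ : 0 < μ)
    (F : ℝ × ℝ → ℝ) (hF : ContDiff ℝ 4 F)
    (f₁ f₂ : ℝ × ℝ → ℝ)
    (hf₁ : f₁ = fun p => -(Ominus v μ F p))
    (hf₂ : f₂ = fun p => Oplus v μ F p) :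
    ((∀ p : ℝ × ℝ, RDSystem α β v μ f₁ f₂ p) ↔
        (∀ p : ℝ × ℝ, Oplus v μ (Ominus v μ F) p = - Kmu α β v μ f₁ f₂ p)) ∧
    (∀ p : ℝ × ℝ,
      ((pderivT f₁ p + v * pderivX f₁ p
          = μ * pderivX (pderivX f₁) p + Kmu α β v μ f₁ f₂ p) ↔
        Oplus v μ (Ominus v μ F) p = - Kmu α β v μ f₁ f₂ p) ∧
      ((pderivT f₂ p - v * pderivX f₂ p
          = μ * pderivX (pderivX f₂) p - Kmu α β v μ f₁ f₂ p) ↔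
        Oplus v μ (Ominus v μ F) p = - Kmu α β v μ f₁ f₂ p)) :=
  system_iff_scalar_general α β v μ F hF f₁ f₂ hf₁ hf₂
end

section
/- Let W₀, W₁ : ℝ → ℝ be continuous with W₀(x) ≥ 0 and W₁(x) ≥ 0 for all x, and let W be defined by the explicit formula W(x,t) = ½[W₀(x+vt) + W₀(x−vt)] + ½ ∫_{x−vt}^{x+vt} I₀( (√(αβ)/v) √(v²t² − (x−x')²) ) W₁(x') dx' + (√(αβ) t / 2) ∫_{x−vt}^{x+vt} [ I₁( (√(αβ)/v) √(v²t² − (x−x')²) ) / √(v²t² − (x−x')²) ] W₀(x') dx'. Then for every x ∈ ℝ and t ≥ 0 one has W(x,t) ≥ ½[W₀(x+vt) + W₀(x−vt)] ≥ 0; in particular, if W₀ is strictly positive everywhere, then W(x,t) > 0 for all x ∈ ℝ and t ≥ 0. -/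
open Real MeasureTheory

/-- For continuous nonnegative data `W₀, W₁`, the explicit formula `W`
satisfies `W(x,t) ≥ ½[W₀(x+vt)+W₀(x−vt)] ≥ 0` for `t ≥ 0`; in particular if `W₀ > 0`
everywhere then `W(x,t) > 0` for all `x` and `t ≥ 0`. -/
theorem wsol_nonneg (α β v μ : ℝ) (hα : 0 < α) (hβ : 0 < β) (hv : 0 < v) (hμ : 0 < μ)
    (W₀ W₁ : ℝ → ℝ) (hW₀c : Continuous W₀) (hW₁c : Continuous W₁)
    (hW₀ : ∀ x : ℝ, 0 ≤ W₀ x) (hW₁ : ∀ x : ℝ, 0 ≤ W₁ x) :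
    (∀ x t : ℝ, 0 ≤ t →
      (W₀ (x + v * t) + W₀ (x - v * t)) / 2 ≤ Wsol α β v W₀ W₁ x t ∧
      0 ≤ (W₀ (x + v * t) + W₀ (x - v * t)) / 2) ∧
    ((∀ x : ℝ, 0 < W₀ x) → ∀ x t : ℝ, 0 ≤ t → 0 < Wsol α β v W₀ W₁ x t) := by
  have hI0 : ∀ z : ℝ, 0 ≤ besselI0 z := by
    intro z
    refine tsum_nonneg fun k => ?_
    have : (z / 2) ^ (2 * k) = ((z / 2) ^ 2) ^ k := by rw [pow_mul]
    rw [this]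
    positivity
  have hI1 : ∀ z : ℝ, 0 ≤ z → 0 ≤ besselI1 z := by
    intro z hz
    refine tsum_nonneg fun k => ?_
    have hz2 : (0:ℝ) ≤ z / 2 := by linarith
    positivity
  have key : ∀ x t : ℝ, 0 ≤ t →
      (W₀ (x + v * t) + W₀ (x - v * t)) / 2 ≤ Wsol α β v W₀ W₁ x t := by
    intro x t ht
    have hab : x - v * t ≤ x + v * t := by nlinarith
    unfold Wsol
    refine le_add_of_nonneg_right (mul_nonneg (by norm_num) ?_)
    refine intervalIntegral.integral_nonneg hab fun y _ => ?_
    refine add_nonneg (mul_nonneg (hI0 _) (hW₁ y)) (mul_nonneg (by positivity) ?_)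
    refine intervalIntegral.integral_nonneg hab fun z _ => ?_
    refine mul_nonneg (div_nonneg (hI1 _ ?_) (Real.sqrt_nonneg _)) (hW₀ z)
    exact mul_nonneg (div_nonneg (Real.sqrt_nonneg _) hv.le) (Real.sqrt_nonneg _)
  refine ⟨fun x t ht => ⟨key x t ht, by have := hW₀ (x + v * t); have := hW₀ (x - v * t); linarith⟩,
    fun hpos x t ht => ?_⟩
  have h := key x t ht
  have h1 := hpos (x + v * t)
  have h2 := hpos (x - v * t)
  linarith
end

section
/- Let f₁⁰, f₂⁰ ∈ C²(ℝ) be admissible initial data, i.e. D⁰(x) − (μ/v) S⁰_x(x) − (μ/(2v²)) S⁰(x)² + α + β ≥ 0 for all x ∈ ℝ, where S⁰ = f₁⁰ + f₂⁰ and D⁰ = f₁⁰ − f₂⁰. Define W₀(x) = exp{ ((α−β)/(2v)) x − (1/(2v)) ∫₀ˣ S⁰(y) dy } and W₁(x) = ½ [ D⁰(x) − (μ/v) S⁰_x(x) − (μ/(2v²)) S⁰(x)² + α + β ] W₀(x), and let W be given by the explicit formula W(x,t) = ½[W₀(x+vt) + W₀(x−vt)] + ½ ∫_{x−vt}^{x+vt}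 I₀( (√(αβ)/v) √(v²t² − (x−x')²) ) W₁(x') dx' + (√(αβ) t / 2) ∫_{x−vt}^{x+vt} [ I₁( (√(αβ)/v) √(v²t² − (x−x')²) ) / √(v²t² − (x−x')²) ] W₀(x') dx'. Then W₀(x) > 0 and W₁(x) ≥ 0 for all x, and consequently W(x,t) > 0 for all x ∈ ℝ and t ≥ 0. -/
open Real MeasureTheory

lemma besselI0_nonneg (z : ℝ) : 0 ≤ besselI0 z := by
  apply tsum_nonneg
  intro k
  apply div_nonneg _ (by positivity)
  exact (even_two_mul k).pow_nonneg _

lemma besselI1_nonneg {z : ℝ} (hz : 0 ≤ z) : 0 ≤ besselI1 z := by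
  apply tsum_nonneg
  intro k
  apply div_nonneg _ (by positivity)
  positivity

/-- For admissible C² initial data, the functions `W₀`, `W₁` built from
the data satisfy `W₀ > 0` and `W₁ ≥ 0`, and consequently the explicit solution `W` is
strictly positive for all `x ∈ ℝ` and `t ≥ 0`. -/
theorem admissible_data_positivity (α β v μ : ℝ) (hα : 0 < α) (hβ : 0 < β) (hv : 0 < v)
    (hμ : 0 < μ) (f₁0 f₂0 : ℝ → ℝ) (hf₁0 : ContDiff ℝ 2 f₁0) (hf₂0 : ContDiff ℝ 2 f₂0)
    (hadm : ∀ x : ℝ, 0 ≤ (f₁0 x - f₂0 x) - (μ / v) * deriv (fun y => f₁0 y + f₂0 y) x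
        - (μ / (2 * v ^ 2)) * (f₁0 x + f₂0 x) ^ 2 + α + β)
    (W₀ W₁ : ℝ → ℝ)
    (hW₀ : W₀ = fun x => Real.exp (((α - β) / (2 * v)) * x
        - (1 / (2 * v)) * ∫ y in (0:ℝ)..x, (f₁0 y + f₂0 y)))
    (hW₁ : W₁ = fun x => (1 / 2) *
        ((f₁0 x - f₂0 x) - (μ / v) * deriv (fun y => f₁0 y + f₂0 y) x
          - (μ / (2 * v ^ 2)) * (f₁0 x + f₂0 x) ^ 2 + α + β) * W₀ x) :
    (∀ x : ℝ, 0 < W₀ x) ∧ (∀ x : ℝ, 0 ≤ W₁ x) ∧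
    (∀ x t : ℝ, 0 ≤ t → 0 < Wsol α β v W₀ W₁ x t) := by
  have h0 : ∀ x : ℝ, 0 < W₀ x := by
    intro x; rw [hW₀]; exact Real.exp_pos _
  have h1 : ∀ x : ℝ, 0 ≤ W₁ x := by
    intro x; rw [hW₁]
    have := hadm x
    have := (h0 x).le
    positivity
  refine ⟨h0, h1, fun x t ht => ?_⟩
  have hab : x - v * t ≤ x + v * t := by nlinarith
  unfold Wsol
  have hI : 0 ≤ ∫ y in (x - v * t)..(x + v * t),
      besselI0 (Real.sqrt (α * β) / v * Real.sqrt (v ^ 2 * t ^ 2 - (x - y) ^ 2)) * W₁ y := by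
    apply intervalIntegral.integral_nonneg hab
    intro u _
    exact mul_nonneg (besselI0_nonneg _) (h1 u)
  have hJ : 0 ≤ ∫ y in (x - v * t)..(x + v * t),
      besselI1 (Real.sqrt (α * β) / v * Real.sqrt (v ^ 2 * t ^ 2 - (x - y) ^ 2)) /
        Real.sqrt (v ^ 2 * t ^ 2 - (x - y) ^ 2) * W₀ y := by
    apply intervalIntegral.integral_nonneg hab
    intro u _
    apply mul_nonneg _ (h0 u).le
    apply div_nonneg _ (Real.sqrt_nonneg _)
    exact besselI1_nonneg (by positivity)
  have hpos : 0 < (W₀ (x + v * t) + W₀ (x - v * t)) / 2 := by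
    have := h0 (x + v * t); have := h0 (x - v * t); linarith
  have hs : 0 ≤ Real.sqrt (α * β) * t / 2 := by positivity
  have h2 : (0:ℝ) ≤ 1/2 := by norm_num
  apply add_pos_of_pos_of_nonneg hpos
  apply mul_nonneg h2
  apply intervalIntegral.integral_nonneg hab
  intro u _
  have hB : 0 ≤ besselI0 (Real.sqrt (α * β) / v *
      Real.sqrt (v ^ 2 * t ^ 2 - (x - u) ^ 2)) * W₁ u :=
    mul_nonneg (besselI0_nonneg _) (h1 u)
  have := mul_nonneg hs hJ
  linarith
end
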